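/- Suppose that in Algorithm niAPG every proximal step is exact, i.e., for every k ≥ 1, x_{k+1} is a global minimizer of w ↦ (1/2)·‖w − z_k‖² + η·g(w). Then for every k ≥ 1: Δ_{k+q+1} ≤ Δ_k − ((ρ − L)/2)·min_{t = k,…,k+q} ‖x_{t+1} − v_t‖². -/

import Mathlib

/-!
Comparing the proximal objective at `x_{t+1}` with its value at `v_t` and adding the descent
lemma `f b ≤ f a + ⟪∇f a, b - a⟫ + (L/2)‖b - a‖²` gives the sufficient decrease
`F(x_{t+1}) ≤ F(v_t) - ((ρ - L)/2)‖x_{t+1} - v_t‖²`. The acceptance test gives `F(v_t) ≤ Δ_t`, so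
each new value lies below the current window maximum; hence `Δ` is nonincreasing, and every value
in the window of `Δ_{k+q+1}` is some `F(x_{t+1})` with `k ≤ t ≤ k + q`, bounded by
`Δ_t - ((ρ - L)/2)‖x_{t+1} - v_t‖² ≤ Δ_k - ((ρ - L)/2) min_t ‖x_{t+1} - v_t‖²`.
-/

open scoped RealInnerProductSpace

theorem le_add_inner_add_sq_of_lipschitz_gradient
    {E : Type*} [NormedAddCommGroup E] [InnerProductSpace ℝ E] [CompleteSpace E]
    {f : E → ℝ} {f' : E → E} {L : ℝ} (hf : ∀ x, HasGradientAt f (f' x) x)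
    (hlip : ∀ x y, ‖f' x - f' y‖ ≤ L * ‖x - y‖) (a b : E) :
    f b ≤ f a + ⟪f' a, b - a⟫ + L / 2 * ‖b - a‖ ^ 2 := by
  set u := b - a
  have hf_line : ∀ s : ℝ, HasDerivAt (fun s : ℝ => f (a + s • u)) ⟪f' (a + s • u), u⟫ s := by
    intro s
    have hline : HasDerivAt (fun s : ℝ => a + s • u) u s := by
      simpa using ((hasDerivAt_id s).smul_const u).const_add a
    have h := (hf (a + s • u)).hasFDerivAt.comp_hasDerivAt s hline
    simp only [InnerProductSpace.toDual_apply_apply] at h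
    exact h
  -- `f` along the segment minus its quadratic model is antitone, by the Lipschitz bound.
  let φ : ℝ → ℝ := fun s => f (a + s • u) - s * ⟪f' a, u⟫ - L / 2 * s ^ 2 * ‖u‖ ^ 2
  have hφ : ∀ s, HasDerivAt φ (⟪f' (a + s • u), u⟫ - ⟪f' a, u⟫ - L * s * ‖u‖ ^ 2) s := by
    intro s
    refine (((hf_line s).sub ((hasDerivAt_id s).mul_const ⟪f' a, u⟫)).sub
      (((hasDerivAt_pow 2 s).const_mul (L / 2)).mul_const (‖u‖ ^ 2))).congr_deriv ?_
    ring
  have hφ' : ∀ s ∈ interior (Set.Ici (0 : ℝ)),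
      ⟪f' (a + s • u), u⟫ - ⟪f' a, u⟫ - L * s * ‖u‖ ^ 2 ≤ 0 := by
    intro s hs
    rw [interior_Ici, Set.mem_Ioi] at hs
    refine sub_nonpos.mpr ?_
    calc ⟪f' (a + s • u), u⟫ - ⟪f' a, u⟫ = ⟪f' (a + s • u) - f' a, u⟫ :=
          (inner_sub_left _ _ _).symm
      _ ≤ ‖f' (a + s • u) - f' a‖ * ‖u‖ := real_inner_le_norm _ _
      _ ≤ L * ‖a + s • u - a‖ * ‖u‖ := by gcongr; exact hlip _ _
      _ = L * s * ‖u‖ ^ 2 := by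
        rw [add_sub_cancel_left, norm_smul, Real.norm_of_nonneg hs.le]; ring
  have hanti := antitoneOn_of_hasDerivWithinAt_nonpos (convex_Ici 0)
    (fun s _ => (hφ s).continuousAt.continuousWithinAt) (fun s _ => (hφ s).hasDerivWithinAt) hφ'
  have h01 : φ 1 ≤ φ 0 := hanti Set.self_mem_Ici (show (1:ℝ) ∈ Set.Ici 0 by norm_num) zero_le_one
  have hφ1 : φ 1 = f b - ⟪f' a, u⟫ - L / 2 * ‖u‖ ^ 2 := by simp [φ, u]
  have hφ0 : φ 0 = f a := by simp [φ]
  linarith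

theorem add_le_sub_of_prox_grad_step
    {E : Type*} [NormedAddCommGroup E] [InnerProductSpace ℝ E] [CompleteSpace E]
    {f g : E → ℝ} {f' : E → E} {L η : ℝ} (hf : ∀ x, HasGradientAt f (f' x) x)
    (hlip : ∀ x y, ‖f' x - f' y‖ ≤ L * ‖x - y‖) (hη : 0 < η) {p u : E}
    (hprox : (1 / 2) * ‖u - (p - η • f' p)‖ ^ 2 + η * g u ≤
      (1 / 2) * ‖p - (p - η • f' p)‖ ^ 2 + η * g p) :
    f u + g u ≤ f p + g p - (1 / η - L) / 2 * ‖u - p‖ ^ 2 := by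
  have hexpand : ‖u - (p - η • f' p)‖ ^ 2 =
      ‖u - p‖ ^ 2 + 2 * η * ⟪f' p, u - p⟫ + ‖p - (p - η • f' p)‖ ^ 2 := by
    rw [sub_sub_cancel, show u - (p - η • f' p) = (u - p) + η • f' p by abel,
      norm_add_sq_real, real_inner_smul_right, real_inner_comm]
    ring
  have hg : g u ≤ g p - ⟪f' p, u - p⟫ - 1 / (2 * η) * ‖u - p‖ ^ 2 := by
    rw [hexpand] at hprox
    have hscaled : η * (g u - g p + ⟪f' p, u - p⟫ + 1 / (2 * η) * ‖u - p‖ ^ 2) ≤ 0 := by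
      field_simp
      linarith
    linarith [nonpos_of_mul_nonpos_right hscaled hη]
  have hdesc := le_add_inner_add_sq_of_lipschitz_gradient hf hlip p u
  linear_combination hg + hdesc

def IsWindowMax (a : ℕ → ℝ) (q : ℕ) (Δ : ℕ → ℝ) : Prop :=
  ∀ k, ∀ hk : 1 ≤ k,
    Δ k = (Finset.Icc (max 1 (k - q)) k).sup'
      (Finset.nonempty_Icc.mpr (max_le hk (Nat.sub_le k q))) a

namespace IsWindowMax

variable {a Δ : ℕ → ℝ} {q : ℕ}

theorem apply_le (hΔ : IsWindowMax a q Δ) {s t : ℕ} (hs : 1 ≤ s) (hst : s ≤ t) (hts : t ≤ s + q) :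
    a s ≤ Δ t := by
  rw [hΔ t (hs.trans hst)]
  exact Finset.le_sup' a (Finset.mem_Icc.mpr ⟨by omega, hst⟩)

theorem succ_le_of_apply_succ_le (hΔ : IsWindowMax a q Δ) {t : ℕ} (ht : 1 ≤ t)
    (hnext : a (t + 1) ≤ Δ t) : Δ (t + 1) ≤ Δ t := by
  rw [hΔ (t + 1) (by omega), Finset.sup'_le_iff]
  intro s hs
  rw [Finset.mem_Icc] at hs
  rcases hs.2.lt_or_eq with hlt | rfl
  · exact hΔ.apply_le (by omega) (by omega) (by omega)
  · exact hnext

theorem le_of_le_of_apply_succ_le (hΔ : IsWindowMax a q Δ)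
    (hnext : ∀ t, 1 ≤ t → a (t + 1) ≤ Δ t) {k t : ℕ} (hk : 1 ≤ k) (hkt : k ≤ t) : Δ t ≤ Δ k := by
  induction t, hkt using Nat.le_induction with
  | base => exact le_rfl
  | succ t hkt ih =>
    exact (hΔ.succ_le_of_apply_succ_le (hk.trans hkt) (hnext t (hk.trans hkt))).trans ih

theorem le_sub_mul_of_apply_succ_le (hΔ : IsWindowMax a q Δ) {c m : ℝ} {d : ℕ → ℝ}
    (hc : 0 ≤ c) (hd : ∀ t, 0 ≤ d t) (hnext : ∀ t, 1 ≤ t → a (t + 1) ≤ Δ t - c * d t)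
    {k : ℕ} (hk : 1 ≤ k) (hm : ∀ t ∈ Finset.Icc k (k + q), m ≤ d t) :
    Δ (k + q + 1) ≤ Δ k - c * m := by
  have hnext' : ∀ t, 1 ≤ t → a (t + 1) ≤ Δ t := fun t ht =>
    (hnext t ht).trans (sub_le_self _ (mul_nonneg hc (hd t)))
  rw [hΔ (k + q + 1) (by omega), Finset.sup'_le_iff]
  intro s hs
  rw [Finset.mem_Icc] at hs
  obtain ⟨t, rfl⟩ : ∃ t, s = t + 1 := ⟨s - 1, by omega⟩
  have hkt : k ≤ t := by omega
  calc a (t + 1) ≤ Δ t - c * d t := hnext t (hk.trans hkt)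
    _ ≤ Δ k - c * m := by
      gcongr
      · exact hΔ.le_of_le_of_apply_succ_le hnext' hk hkt
      · exact hm t (Finset.mem_Icc.mpr ⟨hkt, by omega⟩)

end IsWindowMax

/-- Proposition 7: decrease of `Δ` over a window, exact proximal steps.
If in Algorithm niAPG every proximal step is exact, then for every `k ≥ 1`,
`Δ_{k+q+1} ≤ Δ_k - ((ρ - L)/2) * min_{t = k,…,k+q} ‖x_{t+1} - v_t‖²`. -/
theorem niAPG_exact_Delta_decrease
    {E : Type*} [NormedAddCommGroup E] [InnerProductSpace ℝ E] [FiniteDimensional ℝ E]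
    (f g F : E → ℝ) (f' : E → E) (L η ρ : ℝ)
    (hL : 0 < L)
    (hf : ∀ x, HasGradientAt f (f' x) x)
    (hlip : ∀ x y, ‖f' x - f' y‖ ≤ L * ‖x - y‖)
    (hF : ∀ x, F x = f x + g x)
    (hη : 0 < η) (hηL : η < 1 / L) (hρ : ρ = 1 / η)
    (q : ℕ) (x y v z : ℕ → E) (Δ : ℕ → ℝ)
    (hΔ : ∀ k, ∀ hk : 1 ≤ k, Δ k =
      (Finset.Icc (max 1 (k - q)) k).sup' (Finset.nonempty_Icc.mpr (by omega))
        (fun t => F (x t)))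
    (hv : ∀ k, 1 ≤ k → v k = if F (y k) ≤ Δ k then y k else x k)
    (hz : ∀ k, 1 ≤ k → z k = v k - η • f' (v k))
    (hprox : ∀ k, 1 ≤ k → ∀ w : E,
      (1 / 2) * ‖x (k + 1) - z k‖ ^ 2 + η * g (x (k + 1)) ≤
        (1 / 2) * ‖w - z k‖ ^ 2 + η * g w) :
    ∀ k, 1 ≤ k →
      Δ (k + q + 1) ≤ Δ k - ((ρ - L) / 2) *
        (Finset.Icc k (k + q)).inf' (Finset.nonempty_Icc.mpr (by omega))
          (fun t => ‖x (t + 1) - v t‖ ^ 2) := by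
  have hLρ : L < ρ := by
    rw [hρ, lt_div_iff₀ hη]
    rwa [lt_div_iff₀ hL, mul_comm] at hηL
  have hvΔ : ∀ t, 1 ≤ t → F (v t) ≤ Δ t := by
    intro t ht
    rw [hv t ht]
    split_ifs with hy
    · exact hy
    · exact IsWindowMax.apply_le hΔ ht le_rfl (Nat.le_add_right t q)
  intro k hk
  refine IsWindowMax.le_sub_mul_of_apply_succ_le hΔ (by linarith) (fun t => sq_nonneg _)
    (fun t ht => ?_) hk (fun t ht => Finset.inf'_le _ ht)
  have hstep := add_le_sub_of_prox_grad_step hf hlip hη (hz t ht ▸ hprox t ht (v t))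
  rw [← hF, ← hF, ← hρ] at hstep
  linarith [hvΔ t ht]
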